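/- (Corollary: 1-generic tensors are evaluation tensors.) Let k be a field, d ≥ 3, and W_1,…,W_d k-vector spaces each of dimension m ≥ 1. Let T : W_1^∨ × ⋯ × W_d^∨ → k be a concise multilinear map with dim_k Cen(T) ≥ m. Then the following are equivalent: (1) T is 1-generic, i.e. for every index i there exists α_i ∈ W_i^∨ such that the k-linear map Cen(T) → W_i^∨ sending (X_1,…,X_d) to α_i ∘ X_i is surjective; (2) T is isomorphic to an evaluation tensor, i.e. there exist a finite-dimensional commutative k-algebra A, a k-linear functional ε : A → k, and k-linear bijections σ_i : W_i^∨ → A such that T(α_1,…,α_d) = ε(σ_1(α_1)⋯σ_d(α_d)) for all α_1,…,α_d. Moreover, if these conditions hold, then A is Gorenstein and ε is a dual generator of A. -/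

import Mathlib

/-!
For `d ≥ 3` an element of the centroid can be moved from slot `i` to slot `j` through a third
slot, so `Cen(T)` is closed under composition, and for concise `T` it is commutative and
`X ↦ X_i` is injective on it. Hence a surjection `X ↦ α_i ∘ X_i` is an isomorphism
`Cen(T) ≅ W_i^∨`, and moving every factor into slot `i₀` gives
`T (α₁ ∘ X¹₁, …, α_d ∘ Xᵈ_d) = T (α₁, …, α_{i₀} ∘ (X¹ ⋯ Xᵈ)_{i₀}, …, α_d)`: `T` is the evaluation
tensor of `A = Cen(T)`. Conversely, multiplication by `a ∈ A` transported to every slot of an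
evaluation tensor is a centroid element, and `σ_i⁻¹ 1` witnesses 1-genericity. Finally, if
`ε (c x) = 0` for all `x` then `T` vanishes whenever the `i`-th argument is `σ_i⁻¹ c`, so
conciseness gives `c = 0`: `ε` is a dual generator.
-/

open scoped BigOperators

namespace Stmt13

universe u

variable {k : Type u} [Field k] {d : ℕ} {W : Fin d → Type u}
  [∀ i, AddCommGroup (W i)] [∀ i, Module k (W i)]

/-- The centroid of a multilinear map `T : W₁^∨ × ⋯ × W_d^∨ → k`: the subspace of tuples
`X = (X₁,…,X_d)` of endomorphisms with `X_i ∘_i T = X_j ∘_j T` for all `i, j`, where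
`X_i ∘_i T` is `T` with the `i`-th argument `α_i` replaced by `α_i ∘ X_i`. -/
def centroid (T : MultilinearMap k (fun i : Fin d => Module.Dual k (W i)) k) :
    Submodule k (∀ i, W i →ₗ[k] W i) where
  carrier := {X | ∀ (i j : Fin d) (α : ∀ l : Fin d, Module.Dual k (W l)),
    T (Function.update α i ((X i).dualMap (α i))) =
      T (Function.update α j ((X j).dualMap (α j)))}
  add_mem' := by
    intro X Y hX hY i j α
    have h : ∀ l : Fin d, ((X + Y) l).dualMap (α l)
        = (X l).dualMap (α l) + (Y l).dualMap (α l) := by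
      intro l; ext w; simp [LinearMap.dualMap_apply]
    rw [h i, h j, T.map_update_add, T.map_update_add, hX i j α, hY i j α]
  zero_mem' := by
    intro i j α
    have h : ∀ l : Fin d, ((0 : ∀ i, W i →ₗ[k] W i) l).dualMap (α l) = 0 := by
      intro l; ext w; simp [LinearMap.dualMap_apply]
    rw [h i, h j,
      T.map_coord_zero (m := Function.update α i 0) i (Function.update_self i 0 α),
      T.map_coord_zero (m := Function.update α j 0) j (Function.update_self j 0 α)]
  smul_mem' := by
    intro c X hX i j α
    have h : ∀ l : Fin d, ((c • X) l).dualMap (α l) = c • (X l).dualMap (α l) := by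
      intro l; ext w; simp [LinearMap.dualMap_apply]
    rw [h i, h j, T.map_update_smul, T.map_update_smul, hX i j α]

/-- Conciseness in slot `i`. -/
def ConciseIn (T : MultilinearMap k (fun i : Fin d => Module.Dual k (W i)) k)
    (i : Fin d) : Prop :=
  ∀ α : Module.Dual k (W i),
    (∀ γ : ∀ l : Fin d, Module.Dual k (W l), γ i = α → T γ = 0) → α = 0

/-- Conciseness in every slot. -/
def Concise (T : MultilinearMap k (fun i : Fin d => Module.Dual k (W i)) k) : Prop :=
  ∀ i : Fin d, ConciseIn T i

/-- 1-genericity: for every slot `i` there is `α ∈ W_i^∨` such that the linear map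
`Cen(T) → W_i^∨`, `X ↦ α ∘ X_i`, is surjective. -/
def OneGeneric (T : MultilinearMap k (fun i : Fin d => Module.Dual k (W i)) k) : Prop :=
  ∀ i : Fin d, ∃ α : Module.Dual k (W i),
    Function.Surjective (fun X : centroid T => ((X : ∀ l, W l →ₗ[k] W l) i).dualMap α)

/-- `ε : A → k` is a dual generator: `a ↦ (x ↦ ε (a * x))` is a bijection `A → Dual_k A`.
An algebra admitting a dual generator is Gorenstein. -/
def IsDualGenerator (k : Type u) [Field k] (A : Type u) [CommRing A] [Algebra k A]
    (ε : A →ₗ[k] k) : Prop :=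
  Function.Bijective fun a : A => ε ∘ₗ LinearMap.mulLeft k a

/-- A presentation of `T` as an evaluation tensor: a finite-dimensional commutative
`k`-algebra `A`, a functional `ε : A → k` and linear bijections `σ_i : W_i^∨ → A` with
`T (α₁,…,α_d) = ε (σ₁ α₁ ⋯ σ_d α_d)`. -/
structure EvalPresentation (k : Type u) [Field k] {d : ℕ} (W : Fin d → Type u)
    [∀ i, AddCommGroup (W i)] [∀ i, Module k (W i)]
    (T : MultilinearMap k (fun i : Fin d => Module.Dual k (W i)) k) where
  A : Type u
  [commRing : CommRing A]
  [algebra : Algebra k A]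
  [finite : FiniteDimensional k A]
  ε : A →ₗ[k] k
  σ : ∀ i : Fin d, Module.Dual k (W i) ≃ₗ[k] A
  eval : ∀ α : ∀ i : Fin d, Module.Dual k (W i), T α = ε (∏ i, σ i (α i))

attribute [instance] EvalPresentation.commRing EvalPresentation.algebra
  EvalPresentation.finite

open Function

theorem dualMap_injective {V₁ V₂ : Type*} [AddCommGroup V₁] [Module k V₁] [AddCommGroup V₂]
    [Module k V₂] : Injective fun f : V₁ →ₗ[k] V₂ => f.dualMap := fun _ _ h =>
  LinearMap.ext fun v => Module.eval_apply_injective k <|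
    LinearMap.ext fun φ => LinearMap.congr_fun (LinearMap.congr_fun h φ) v

theorem exists_dualMap_eq {R M₁ M₂ : Type*} [CommRing R] [AddCommGroup M₁] [Module R M₁]
    [AddCommGroup M₂] [Module R M₂] [Module.IsReflexive R M₂]
    (g : Module.Dual R M₂ →ₗ[R] Module.Dual R M₁) : ∃ f : M₁ →ₗ[R] M₂, f.dualMap = g :=
  ⟨(Module.evalEquiv R M₂).symm.toLinearMap ∘ₗ g.dualMap ∘ₗ Module.Dual.eval R M₁, by
    ext φ v; simp⟩

theorem Finset.prod_update_mul_self {ι M : Type*} [Fintype ι] [DecidableEq ι] [CommMonoid M]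
    (f : ι → M) (i : ι) (a : M) : ∏ j, update f i (a * f i) j = a * ∏ j, f j := by
  rw [Finset.prod_update_of_mem (Finset.mem_univ i), Finset.sdiff_singleton_eq_erase, mul_assoc,
    Finset.mul_prod_erase _ _ (Finset.mem_univ i)]

theorem exists_ne_ne_of_three_le (hd : 3 ≤ d) (i j : Fin d) : ∃ l : Fin d, l ≠ i ∧ l ≠ j := by
  obtain ⟨l, -, hl⟩ := Finset.exists_mem_notMem_of_card_lt_card (s := {i, j}) (t := .univ)
    (Finset.card_le_two.trans_lt (by simp only [Finset.card_univ, Fintype.card_fin]; omega))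
  simp only [Finset.mem_insert, Finset.mem_singleton, not_or] at hl
  exact ⟨l, hl⟩

theorem dualMap_pi_mul_apply (X Y : ∀ i, W i →ₗ[k] W i) (i : Fin d) (φ : Module.Dual k (W i)) :
    ((X * Y) i).dualMap φ = (Y i).dualMap ((X i).dualMap φ) := rfl

section Centroid

variable {T : MultilinearMap k (fun i : Fin d => Module.Dual k (W i)) k}
  {X Y : ∀ i, W i →ₗ[k] W i}

theorem centroid.map_update_update_dualMap (hX : X ∈ centroid T) {i j : Fin d} (hij : i ≠ j)
    (α : ∀ l, Module.Dual k (W l)) (β : Module.Dual k (W i)) :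
    T (update (update α i β) j ((X j).dualMap (α j))) = T (update α i ((X i).dualMap β)) := by
  simpa only [update_of_ne hij.symm, update_self, update_idem] using hX j i (update α i β)

theorem centroid.map_update_mul_dualMap (hX : X ∈ centroid T) (hY : Y ∈ centroid T)
    {i l : Fin d} (hli : l ≠ i) (α : ∀ l, Module.Dual k (W l)) :
    T (update α i (((X * Y) i).dualMap (α i))) = T (update α l (((Y * X) l).dualMap (α l))) := by
  rw [dualMap_pi_mul_apply, dualMap_pi_mul_apply,
    ← centroid.map_update_update_dualMap hY hli.symm, update_comm hli.symm,
    centroid.map_update_update_dualMap hX hli]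

theorem one_mem_centroid : (1 : ∀ i, W i →ₗ[k] W i) ∈ centroid T := fun i j α => by
  simp only [Pi.one_apply, Module.End.one_eq_id, LinearMap.dualMap_id, LinearMap.id_apply,
    update_eq_self]

theorem mul_mem_centroid (hd : 3 ≤ d) (hX : X ∈ centroid T) (hY : Y ∈ centroid T) :
    X * Y ∈ centroid T := fun i j α => by
  obtain ⟨l, hli, hlj⟩ := exists_ne_ne_of_three_le hd i j
  rw [centroid.map_update_mul_dualMap hX hY hli, ← centroid.map_update_mul_dualMap hX hY hlj]

theorem ConciseIn.ext {i : Fin d} (hT : ConciseIn T i) {f g : W i →ₗ[k] W i}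
    (h : ∀ α, T (update α i (f.dualMap (α i))) = T (update α i (g.dualMap (α i)))) : f = g := by
  refine dualMap_injective (LinearMap.ext fun β => sub_eq_zero.1 <| hT _ fun γ hγ => ?_)
  have hβ := h (update γ i β)
  simp only [update_self, update_idem] at hβ
  rw [← update_eq_self i γ, hγ, T.map_update_sub, hβ, sub_self]

theorem Concise.centroid_ext (hT : Concise T) (hX : X ∈ centroid T) (hY : Y ∈ centroid T)
    {i : Fin d} (h : X i = Y i) : X = Y :=
  funext fun j => (hT j).ext fun α => by rw [hX j i α, hY j i α, h]

theorem Concise.centroid_mul_comm (hd : 3 ≤ d) (hT : Concise T) (hX : X ∈ centroid T)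
    (hY : Y ∈ centroid T) : X * Y = Y * X :=
  funext fun i => (hT i).ext fun α => by
    obtain ⟨l, hli, -⟩ := exists_ne_ne_of_three_le hd i i
    rw [centroid.map_update_mul_dualMap hX hY hli]
    exact mul_mem_centroid hd hY hX l i α

end Centroid

section CentroidAlgebra

variable (T : MultilinearMap k (fun i : Fin d => Module.Dual k (W i)) k) (hd : 3 ≤ d)

def centroidSubalgebra : Subalgebra k (∀ i, W i →ₗ[k] W i) :=
  (centroid T).toSubalgebra one_mem_centroid fun _ _ => mul_mem_centroid hd

abbrev centroidCommRing (hT : Concise T) : CommRing (centroidSubalgebra T hd) :=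
  { (centroidSubalgebra T hd).toRing with
    mul_comm := fun X Y => Subtype.ext (hT.centroid_mul_comm hd X.2 Y.2) }

def centroidEval (i : Fin d) (α : Module.Dual k (W i)) :
    centroidSubalgebra T hd →ₗ[k] Module.Dual k (W i) where
  toFun X := ((X : ∀ l, W l →ₗ[k] W l) i).dualMap α
  map_add' X Y := by ext; simp
  map_smul' c X := by ext; simp

variable {T hd}

theorem Concise.centroidEval_injective (hT : Concise T) {i : Fin d} {α : Module.Dual k (W i)}
    (hsurj : Surjective (centroidEval T hd i α)) : Injective (centroidEval T hd i α) := by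
  intro X Y hXY
  refine Subtype.ext (hT.centroid_ext X.2 Y.2 (i := i) (dualMap_injective ?_))
  ext1 β
  obtain ⟨U, rfl⟩ := hsurj β
  have hU (V : centroidSubalgebra T hd) : (V.1 i).dualMap ((U.1 i).dualMap α) =
      (U.1 i).dualMap (centroidEval T hd i α V) := by
    rw [← dualMap_pi_mul_apply, hT.centroid_mul_comm hd U.2 V.2]; rfl
  exact (hU X).trans (hXY ▸ (hU Y).symm)

end CentroidAlgebra

section ProductFormula

variable {T : MultilinearMap k (fun i : Fin d => Module.Dual k (W i)) k} {A : Type*}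
  [CommMonoid A] {ρ : A →* ∀ i, W i →ₗ[k] W i}

theorem map_update_piecewise_dualMap (hρ : ∀ a, ρ a ∈ centroid T) (Z : Fin d → A)
    (α : ∀ l, Module.Dual k (W l)) {i : Fin d} (X : ∀ l, W l →ₗ[k] W l) {S : Finset (Fin d)}
    (hi : i ∉ S) :
    T (update (S.piecewise (fun t => (ρ (Z t) t).dualMap (α t)) α) i ((X i).dualMap (α i))) =
      T (update α i (((X * ρ (∏ t ∈ S, Z t)) i).dualMap (α i))) := by
  induction S using Finset.induction_on generalizing X with
  | empty => simp
  | insert j S hj ih =>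
    have hij : i ≠ j := fun h => hi (h ▸ Finset.mem_insert_self i S)
    have hj' : S.piecewise (fun t => (ρ (Z t) t).dualMap (α t)) α j = α j :=
      Finset.piecewise_eq_of_notMem _ _ _ hj
    rw [Finset.piecewise_insert, update_comm hij.symm, ← hj',
      centroid.map_update_update_dualMap (hρ (Z j)) hij, ← dualMap_pi_mul_apply,
      ih _ (by simp_all), Finset.prod_insert hj, map_mul, mul_assoc]

theorem map_dualMap_eq_map_update_prod (hρ : ∀ a, ρ a ∈ centroid T) (Z : Fin d → A)
    (α : ∀ l, Module.Dual k (W l)) (i : Fin d) :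
    T (fun t => (ρ (Z t) t).dualMap (α t)) =
      T (update α i ((ρ (∏ t, Z t) i).dualMap (α i))) := by
  have h := map_update_piecewise_dualMap hρ Z α (ρ (Z i)) (Finset.notMem_erase i Finset.univ)
  rwa [Finset.piecewise_erase_univ, update_idem, update_eq_self, ← map_mul,
    Finset.mul_prod_erase _ _ (Finset.mem_univ i)] at h

end ProductFormula

variable {T : MultilinearMap k (fun i : Fin d => Module.Dual k (W i)) k}

noncomputable def EvalPresentation.ofOneGeneric [∀ i, FiniteDimensional k (W i)] (hd : 3 ≤ d)
    (hT : Concise T) (α : ∀ i, Module.Dual k (W i))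
    (hα : ∀ i, Surjective (centroidEval T hd i (α i))) : EvalPresentation k W T :=
  letI := centroidCommRing T hd hT
  let σ i := (LinearEquiv.ofBijective _ ⟨hT.centroidEval_injective (hα i), hα i⟩).symm
  { A := centroidSubalgebra T hd
    ε := T.toLinearMap α ⟨0, by omega⟩ ∘ₗ centroidEval T hd _ (α _)
    σ := σ
    eval := fun β => by
      have hβ : (fun t => ((σ t (β t) : ∀ l, W l →ₗ[k] W l) t).dualMap (α t)) = β :=
        funext fun t => (σ t).symm_apply_apply (β t)
      conv_lhs => rw [← hβ]
      exact map_dualMap_eq_map_update_prod (ρ := (centroidSubalgebra T hd).val.toMonoidHom)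
        (fun a => a.2) _ α _ }

theorem EvalPresentation.exists_mem_centroid_dualMap_eq_mul (P : EvalPresentation k W T)
    [∀ i, FiniteDimensional k (W i)] (a : P.A) :
    ∃ X ∈ centroid T, ∀ i φ, P.σ i ((X i).dualMap φ) = a * P.σ i φ := by
  choose X hX using fun i => exists_dualMap_eq
    ((P.σ i).symm.toLinearMap ∘ₗ LinearMap.mulLeft k a ∘ₗ (P.σ i).toLinearMap)
  have hXσ i φ : P.σ i ((X i).dualMap φ) = a * P.σ i φ := by simp [hX]
  refine ⟨X, fun i j α => ?_, hXσ⟩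
  simp only [P.eval, apply_update (fun l => P.σ l), hXσ, Finset.prod_update_mul_self]

theorem EvalPresentation.oneGeneric (P : EvalPresentation k W T)
    [∀ i, FiniteDimensional k (W i)] : OneGeneric T := fun i => by
  refine ⟨(P.σ i).symm 1, fun β => ?_⟩
  obtain ⟨X, hX, hXσ⟩ := P.exists_mem_centroid_dualMap_eq_mul (P.σ i β)
  exact ⟨⟨X, hX⟩, (P.σ i).injective (by simp [hXσ])⟩

theorem isDualGenerator_of_forall_mul_eq_zero {A : Type u} [CommRing A] [Algebra k A]
    [FiniteDimensional k A] {ε : A →ₗ[k] k} (h : ∀ c, (∀ x, ε (c * x) = 0) → c = 0) :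
    IsDualGenerator k A ε := by
  have hinj : Injective (LinearMap.compRight k ε ∘ₗ LinearMap.mul k A) :=
    (injective_iff_map_eq_zero _).2 fun c hc => h c fun x => LinearMap.congr_fun hc x
  exact ⟨hinj, (LinearMap.injective_iff_surjective_of_finrank_eq_finrank
    Subspace.dual_finrank_eq.symm).1 hinj⟩

theorem EvalPresentation.isDualGenerator (P : EvalPresentation k W T) {i : Fin d}
    (hT : ConciseIn T i) : IsDualGenerator k P.A P.ε :=
  isDualGenerator_of_forall_mul_eq_zero fun c hc => by
    have h : (P.σ i).symm c = 0 := hT _ fun γ hγ => by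
      rw [P.eval, ← Finset.mul_prod_erase _ _ (Finset.mem_univ i), hγ,
        LinearEquiv.apply_symm_apply, hc]
    simpa using h

theorem one_generic_iff_evaluation_general
    (hd : 3 ≤ d)
    [∀ i, FiniteDimensional k (W i)]
    (T : MultilinearMap k (fun i : Fin d => Module.Dual k (W i)) k)
    (hconc : Concise T) :
    (OneGeneric T ↔ Nonempty (EvalPresentation k W T)) ∧
    (OneGeneric T → ∀ P : EvalPresentation k W T, IsDualGenerator k P.A P.ε) := by
  refine ⟨⟨fun hgen => ?_, fun ⟨P⟩ => P.oneGeneric⟩,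
    fun _ P => P.isDualGenerator (hconc ⟨0, by omega⟩)⟩
  choose α hα using hgen
  exact ⟨.ofOneGeneric hd hconc α fun i β => by
    obtain ⟨X, hX⟩ := hα i β
    exact ⟨⟨X.1, X.2⟩, hX⟩⟩

/-- **1-generic tensors are evaluation tensors.** Let `d ≥ 3`, `dim W_i = m ≥ 1`, and let
`T` be concise with `dim Cen(T) ≥ m`. Then `T` is 1-generic if and only if `T` is
isomorphic to an evaluation tensor; moreover, in that case, for any such presentation the
algebra `A` is Gorenstein with dual generator `ε`. -/
theorem one_generic_iff_evaluation
    (hd : 3 ≤ d) (m : ℕ) (hm : 1 ≤ m)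
    [∀ i, FiniteDimensional k (W i)] (hdim : ∀ i, Module.finrank k (W i) = m)
    (T : MultilinearMap k (fun i : Fin d => Module.Dual k (W i)) k)
    (hconc : Concise T) (hcen : m ≤ Module.finrank k (centroid T)) :
    (OneGeneric T ↔ Nonempty (EvalPresentation k W T)) ∧
    (OneGeneric T → ∀ P : EvalPresentation k W T, IsDualGenerator k P.A P.ε) :=
  one_generic_iff_evaluation_general hd T hconc

end Stmt13
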